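/- Consider the bilevel problem (P1): minimize cᵀx over x ∈ {0,1}^n, r^u ∈ {0,1}^n, (u, r^l) optimal for the lower level, subject to aᵀx + bᵀr^u ≤ d_u and the McCormick inequalities linking (x, u, r^u); the lower level minimizes -bᵀr^l over u, r^l ∈ {0,1}^n subject to Cx + Du ≤ d_l and the McCormick inequalities linking (x, u, r^l). Consider also (P2): minimize cᵀx over x ∈ {0,1}^n and (u, r^l) optimal for the same lower level, subject to aᵀx + bᵀr^l ≤ d_u. Then for every bilevel-feasible point (x, r^u, u, r^l) of (P1), the point (x, u, r^l) is bilevel-feasible for (P2) with the same objective value, and for every bilevel-feasible point (x, u, r^l) of (P2), the point (x, r^l, u, r^l) is bilevel-feasible for (P1) with the same objective value. -/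
import Mathlib


/-- A vector is binary. -/
def IsBinary {n : ℕ} (x : Fin n → ℝ) : Prop := ∀ i, x i = 0 ∨ x i = 1

/-- McCormick inequalities linking `x`, `u` and the auxiliary variable `r`. -/
def McCormick {n : ℕ} (x u r : Fin n → ℝ) : Prop :=
  ∀ i, -u i + r i ≤ 0 ∧ -x i + r i ≤ 0 ∧ x i + u i - r i ≤ 1

/-- Feasibility for the lower-level problem (with McCormick inequalities),
parameterized by the upper-level decision `x`. -/
def LLFeas {n m : ℕ} (C D : Matrix (Fin m) (Fin n) ℝ) (dl : Fin m → ℝ)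
    (x u rl : Fin n → ℝ) : Prop :=
  IsBinary u ∧ IsBinary rl ∧
  (∀ j, (∑ i, C j i * x i) + (∑ i, D j i * u i) ≤ dl j) ∧
  McCormick x u rl

/-- Global optimality for the lower-level problem minimizing `-bᵀ rl`. -/
def LLOpt {n m : ℕ} (b : Fin n → ℝ) (C D : Matrix (Fin m) (Fin n) ℝ)
    (dl : Fin m → ℝ) (x u rl : Fin n → ℝ) : Prop :=
  LLFeas C D dl x u rl ∧
  ∀ u' rl', LLFeas C D dl x u' rl' →
    -(∑ i, b i * rl i) ≤ -(∑ i, b i * rl' i)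

/-- Bilevel feasibility for problem (P1): McCormick inequalities in both levels. -/
def P1Feas {n m : ℕ} (a b : Fin n → ℝ) (du : ℝ)
    (C D : Matrix (Fin m) (Fin n) ℝ) (dl : Fin m → ℝ)
    (x ru u rl : Fin n → ℝ) : Prop :=
  IsBinary x ∧ IsBinary ru ∧
  (∑ i, a i * x i) + (∑ i, b i * ru i) ≤ du ∧
  McCormick x u ru ∧
  LLOpt b C D dl x u rl

/-- Bilevel feasibility for problem (P2): McCormick inequalities only in the
lower level. -/
def P2Feas {n m : ℕ} (a b : Fin n → ℝ) (du : ℝ)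
    (C D : Matrix (Fin m) (Fin n) ℝ) (dl : Fin m → ℝ)
    (x u rl : Fin n → ℝ) : Prop :=
  IsBinary x ∧
  (∑ i, a i * x i) + (∑ i, b i * rl i) ≤ du ∧
  LLOpt b C D dl x u rl

theorem mccormick_in_lower_level {n m : ℕ} (a b c : Fin n → ℝ) (du : ℝ)
    (C D : Matrix (Fin m) (Fin n) ℝ) (dl : Fin m → ℝ) :
    (∀ x ru u rl : Fin n → ℝ, P1Feas a b du C D dl x ru u rl →
      P2Feas a b du C D dl x u rl ∧
      (∑ i, c i * x i) = (∑ i, c i * x i)) ∧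
    (∀ x u rl : Fin n → ℝ, P2Feas a b du C D dl x u rl →
      P1Feas a b du C D dl x rl u rl ∧
      (∑ i, c i * x i) = (∑ i, c i * x i)) := by
  have key : ∀ x u r : Fin n → ℝ, IsBinary x → IsBinary u → IsBinary r →
      McCormick x u r → ∀ i, r i = x i * u i := by
    intro x u r hx hu hr mc i
    obtain ⟨h1, h2, h3⟩ := mc i
    rcases hx i with hxi | hxi <;> rcases hu i with hui | hui <;>
      rcases hr i with hri | hri <;> simp [hxi, hui, hri] at * <;> linarith
  constructor
  · rintro x ru u rl ⟨hx, hru, hup, hmc, hopt⟩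
    obtain ⟨⟨hu, hrl, hC, hmcl⟩, _⟩ := id hopt
    have heq : ru = rl := by
      funext i
      rw [key x u ru hx hu hru hmc i, key x u rl hx hu hrl hmcl i]
    exact ⟨⟨hx, heq ▸ hup, hopt⟩, rfl⟩
  · rintro x u rl ⟨hx, hup, hopt⟩
    obtain ⟨⟨hu, hrl, hC, hmcl⟩, _⟩ := id hopt
    exact ⟨⟨hx, hrl, hup, hmcl, hopt⟩, rfl⟩
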